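/- arXiv:1106.5716 — 5 statements merged into one kernel-verified Lean document; each statement's English description precedes it below -/
import Mathlib

section
/- Let U, V solve the Painlevé-II system U'' + 2U²V + (1/3)yU = 0, V'' + 2UV² + (1/3)yV = 0, with U nonvanishing on an interval, and suppose λ := VU' - UV' is the constant Wronskian. Then P := U'/U satisfies the inhomogeneous Painlevé-II equation P'' = 2P³ + (2/3)yP - (1/3 - 2λ). -/
/-- if `U, V` solve the coupled Painlevé-II system on an open interval where
`U` does not vanish, and `λ = VU' - UV'` is the constant Wronskian, then `P = U'/U`
satisfies the inhomogeneous Painlevé-II equation `P'' = 2P³ + (2/3)yP - (1/3 - 2λ)`. -/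
theorem stmt_5 (U V : ℝ → ℝ) (I : Set ℝ) (hI : IsOpen I) (lam : ℝ)
    (hU : ContDiff ℝ (⊤ : ℕ∞) U) (hV : ContDiff ℝ (⊤ : ℕ∞) V)
    (h1 : ∀ y ∈ I, deriv (deriv U) y + 2 * U y ^ 2 * V y + (1 / 3) * y * U y = 0)
    (h2 : ∀ y ∈ I, deriv (deriv V) y + 2 * U y * V y ^ 2 + (1 / 3) * y * V y = 0)
    (hU0 : ∀ y ∈ I, U y ≠ 0)
    (hlam : ∀ y ∈ I, V y * deriv U y - U y * deriv V y = lam) :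
    ∀ y ∈ I, deriv (deriv fun t => deriv U t / U t) y =
      2 * (deriv U y / U y) ^ 3 + (2 / 3) * y * (deriv U y / U y) - (1 / 3 - 2 * lam) := by
  intro y hy
  have hU2 : ContDiff ℝ ((⊤ : ℕ∞) : WithTop ℕ∞) U := hU.of_le (by simp)
  have hU' : ContDiff ℝ ((⊤ : ℕ∞) : WithTop ℕ∞) (deriv U) := (contDiff_infty_iff_deriv.mp hU2).2
  have hdU : Differentiable ℝ U := hU.differentiable (by simp)
  have hdU' : Differentiable ℝ (deriv U) := hU'.differentiable (by simp)
  have hdV : Differentiable ℝ V := hV.differentiable (by simp)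
  -- Step 1: on I, deriv (U'/U) = -2UV - y/3 - (U'/U)^2
  have key : ∀ z ∈ I, deriv (fun t => deriv U t / U t) z
      = -(2 * (U z * V z)) - (1/3) * z - (deriv U z / U z)^2 := by
    intro z hz
    have hz0 := hU0 z hz
    rw [deriv_fun_div (hdU'.differentiableAt) (hdU.differentiableAt) hz0]
    have h1z := h1 z hz
    field_simp
    linear_combination (3 * U z) * h1z
  have heq : deriv (fun t => deriv U t / U t)
      =ᶠ[nhds y] fun z => -(2 * (U z * V z)) - (1/3) * z - (deriv U z / U z)^2 := by
    filter_upwards [hI.mem_nhds hy] with z hz using key z hz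
  rw [heq.deriv_eq]
  have hy0 := hU0 y hy
  have hP : HasDerivAt (fun z => deriv U z / U z)
      ((deriv (deriv U) y * U y - deriv U y * deriv U y) / U y ^ 2) y :=
    (hdU'.differentiableAt.hasDerivAt).div (hdU.differentiableAt.hasDerivAt) hy0
  have hD := ((((hdU.differentiableAt.hasDerivAt.mul
      hdV.differentiableAt.hasDerivAt).const_mul (2:ℝ)).neg.sub
      ((hasDerivAt_id y).const_mul (1/3:ℝ))).sub (hP.pow 2))
  simp only [id_eq] at hD
  rw [show deriv (fun z => -(2 * (U z * V z)) - 1 / 3 * z - (deriv U z / U z) ^ 2) y = _ from hD.deriv]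
  have h1y := h1 y hy
  have hly := hlam y hy
  push_cast
  field_simp
  linear_combination (-6 * U y * deriv U y) * h1y + (6 * U y ^ 3) * hly
end

section
/- Let U, V solve the Painlevé-II system U'' + 2U²V + (1/3)yU = 0, V'' + 2UV² + (1/3)yV = 0 with V nonvanishing on an interval, and let λ := VU' - UV' be the constant Wronskian. Then Q := V'/V satisfies Q'' = 2Q³ + (2/3)yQ - (1/3 + 2λ). -/
/-- if `U, V` solve the coupled Painlevé-II system on an open interval where
`V` does not vanish, and `λ = VU' - UV'` is the constant Wronskian, then `Q = V'/V`
satisfies `Q'' = 2Q³ + (2/3)yQ - (1/3 + 2λ)`. -/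
theorem stmt_6 (U V : ℝ → ℝ) (I : Set ℝ) (hI : IsOpen I) (lam : ℝ)
    (hU : ContDiff ℝ (⊤ : ℕ∞) U) (hV : ContDiff ℝ (⊤ : ℕ∞) V)
    (h1 : ∀ y ∈ I, deriv (deriv U) y + 2 * U y ^ 2 * V y + (1 / 3) * y * U y = 0)
    (h2 : ∀ y ∈ I, deriv (deriv V) y + 2 * U y * V y ^ 2 + (1 / 3) * y * V y = 0)
    (hV0 : ∀ y ∈ I, V y ≠ 0)
    (hlam : ∀ y ∈ I, V y * deriv U y - U y * deriv V y = lam) :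
    ∀ y ∈ I, deriv (deriv fun t => deriv V t / V t) y =
      2 * (deriv V y / V y) ^ 3 + (2 / 3) * y * (deriv V y / V y) - (1 / 3 + 2 * lam) := by
  have hU1 : Differentiable ℝ U := hU.differentiable (by simp)
  have hV1 : Differentiable ℝ V := hV.differentiable (by simp)
  have hU2 : Differentiable ℝ (deriv U) :=
    (contDiff_infty_iff_deriv.mp (hU.of_le (by simp))).2.differentiable (by simp)
  have hV2 : Differentiable ℝ (deriv V) :=
    (contDiff_infty_iff_deriv.mp (hV.of_le (by simp))).2.differentiable (by simp)
  set Q : ℝ → ℝ := fun t => deriv V t / V t with hQ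
  have hQder : ∀ t ∈ I, HasDerivAt Q
      ((deriv (deriv V) t * V t - deriv V t * deriv V t) / V t ^ 2) t := by
    intro t ht
    exact ((hV2 t).hasDerivAt).div ((hV1 t).hasDerivAt) (hV0 t ht)
  have hQd : ∀ t ∈ I, deriv Q t = -2 * U t * V t - t / 3 - Q t ^ 2 := by
    intro t ht
    rw [(hQder t ht).deriv]
    have h2t := h2 t ht
    have hv := hV0 t ht
    have hddV : deriv (deriv V) t = -(2 * U t * V t ^ 2) - (1 / 3) * t * V t := by
      linarith
    rw [hddV]
    simp only [hQ]
    field_simp [hQ]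
  intro y hy
  have hmem : I ∈ nhds y := hI.mem_nhds hy
  have heq : deriv Q =ᶠ[nhds y] fun t => -2 * U t * V t - t / 3 - Q t ^ 2 := by
    filter_upwards [hmem] with t ht using hQd t ht
  rw [Filter.EventuallyEq.deriv_eq heq]
  have hQy : HasDerivAt Q (deriv Q y) y := (hQder y hy).congr_deriv (hQder y hy).deriv.symm
  have hrhs : HasDerivAt (fun t => -2 * U t * V t - t / 3 - Q t ^ 2)
      (-2 * (deriv U y * V y + U y * deriv V y) - 1 / 3 - 2 * Q y * deriv Q y) y := by
    have h1' : HasDerivAt (fun t => -2 * U t * V t)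
        (-2 * (deriv U y * V y + U y * deriv V y)) y := by
      have := ((hU1 y).hasDerivAt.mul (hV1 y).hasDerivAt).const_mul (-2 : ℝ)
      simpa [mul_comm, mul_assoc, mul_left_comm] using this
    have h2' : HasDerivAt (fun t : ℝ => t / 3) (1 / 3) y := by
      simpa using (hasDerivAt_id y).div_const 3
    have h3' : HasDerivAt (fun t => Q t ^ 2) (2 * Q y * deriv Q y) y := by
      have := hQy.fun_pow 2
      simpa [mul_comm, mul_assoc, mul_left_comm] using this
    exact (h1'.sub h2').sub h3'
  rw [hrhs.deriv]
  have hQdy := hQd y hy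
  have hl := hlam y hy
  have hv := hV0 y hy
  rw [hQdy]
  have hQdef : Q y = deriv V y / V y := rfl
  show -2 * (deriv U y * V y + U y * deriv V y) - 1 / 3 -
      2 * Q y * (-2 * U y * V y - y / 3 - Q y ^ 2) =
      2 * Q y ^ 3 + 2 / 3 * y * Q y - (1 / 3 + 2 * lam)
  have hUV : deriv U y * V y = lam + U y * deriv V y := by linarith
  rw [hUV, hQdef]
  field_simp
  ring
end

section
/- Define u(X,T) modulo 2π by cos(u(X,T)) = 8X² sech²(T)/(1 + X² sech²(T))² - 1 and sin(u(X,T)) = 4κ X sech(T)(1 - X² sech²(T))/(1 + X² sech²(T))², with κ = ±1. Then cos(u)² + sin(u)² = 1 for all real X, T, and u satisfies the sine-Gordon equation u_{TT} - u_{XX} + sin(u) = 0. -/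
/-!
With `y = X sech T`, the formulas are `cos u = -cos (4 arctan y)` and `sin u = κ sin (4 arctan y)`,
so they are realised by the explicit kink `u₀ = π - 4κ arctan (X sech T)`. Since `u` and `u₀` are
continuous with the same cosine and sine, `u - u₀` is a continuous function with values in the
discrete group `2πℤ`, hence constant on the connected plane; the sine-Gordon equation for `u` thus
reduces to a direct computation for `u₀`.
-/

open Real

theorem Real.cos_two_mul_arctan (y : ℝ) : cos (2 * arctan y) = (1 - y ^ 2) / (1 + y ^ 2) := by
  rw [cos_two_mul, cos_sq_arctan]
  field_simp
  ring

theorem Real.sin_two_mul_arctan (y : ℝ) : sin (2 * arctan y) = 2 * y / (1 + y ^ 2) := by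
  have hsqrt : √(1 + y ^ 2) ^ 2 = 1 + y ^ 2 := sq_sqrt (by positivity)
  have hsqrt_ne : √(1 + y ^ 2) ≠ 0 := (sqrt_pos.mpr (by positivity)).ne'
  rw [sin_two_mul, sin_arctan, cos_arctan]
  field_simp
  rw [hsqrt]

theorem Real.cos_four_mul_arctan (y : ℝ) :
    cos (4 * arctan y) = (1 - 6 * y ^ 2 + y ^ 4) / (1 + y ^ 2) ^ 2 := by
  rw [show 4 * arctan y = 2 * (2 * arctan y) by ring, cos_two_mul, cos_two_mul_arctan]
  field_simp
  ring

theorem Real.sin_four_mul_arctan (y : ℝ) :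
    sin (4 * arctan y) = 4 * y * (1 - y ^ 2) / (1 + y ^ 2) ^ 2 := by
  rw [show 4 * arctan y = 2 * (2 * arctan y) by ring, sin_two_mul, cos_two_mul_arctan,
    sin_two_mul_arctan]
  field_simp
  ring

theorem sub_eq_sub_of_cos_eq_of_sin_eq {α : Type*} [TopologicalSpace α] [PreconnectedSpace α]
    {f g : α → ℝ} (hf : Continuous f) (hg : Continuous g)
    (hcos : ∀ x, cos (f x) = cos (g x)) (hsin : ∀ x, sin (f x) = sin (g x)) (x y : α) :
    f x - g x = f y - g y := by
  have hdisc : IsDiscrete (AddSubgroup.zmultiples (2 * π) : Set ℝ) :=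
    isDiscrete_iff_discreteTopology.mpr
      (inferInstanceAs (DiscreteTopology (AddSubgroup.zmultiples (2 * π))))
  have hmem : Set.MapsTo (f - g) Set.univ (AddSubgroup.zmultiples (2 * π)) := fun z _ =>
    QuotientAddGroup.eq_iff_sub_mem.mp (Angle.cos_sin_inj (hcos z) (hsin z))
  exact isPreconnected_univ.constant_of_mapsTo hdisc (hf.sub hg).continuousOn hmem trivial trivial

noncomputable def grazingKink (κ X T : ℝ) : ℝ :=
  π - 4 * κ * arctan (X * (cosh T)⁻¹)

theorem continuous_grazingKink (κ : ℝ) : Continuous (Function.uncurry (grazingKink κ)) :=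
  continuous_const.sub <| continuous_const.mul <| continuous_arctan.comp <|
    continuous_fst.mul <| (continuous_cosh.comp continuous_snd).inv₀ fun _ => (cosh_pos _).ne'

section
variable (κ X T : ℝ)

theorem hasDerivAt_grazingKink_time :
    HasDerivAt (fun T => grazingKink κ X T) (4 * κ * X * sinh T / (cosh T ^ 2 + X ^ 2)) T := by
  have hc := (cosh_pos T).ne'
  have hy : HasDerivAt (fun T => X * (cosh T)⁻¹) (X * (-sinh T / cosh T ^ 2)) T :=
    ((hasDerivAt_cosh T).inv hc).const_mul X
  refine (((hasDerivAt_arctan _).comp T hy).const_mul (4 * κ)).const_sub π |>.congr_deriv ?_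
  field_simp

theorem hasDerivAt_grazingKink_space :
    HasDerivAt (fun X => grazingKink κ X T) (-(4 * κ * cosh T) / (cosh T ^ 2 + X ^ 2)) X := by
  have hc := (cosh_pos T).ne'
  have hy : HasDerivAt (fun X => X * (cosh T)⁻¹) (cosh T)⁻¹ X := hasDerivAt_mul_const _
  refine (((hasDerivAt_arctan _).comp X hy).const_mul (4 * κ)).const_sub π |>.congr_deriv ?_
  field_simp

theorem hasDerivAt_deriv_grazingKink_time :
    HasDerivAt (deriv fun T => grazingKink κ X T)
      ((4 * κ * X * cosh T * (cosh T ^ 2 + X ^ 2) - 4 * κ * X * sinh T * (2 * cosh T * sinh T)) /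
        (cosh T ^ 2 + X ^ 2) ^ 2) T := by
  have hden : HasDerivAt (fun T => cosh T ^ 2 + X ^ 2) (2 * cosh T * sinh T) T := by
    simpa using ((hasDerivAt_cosh T).pow 2).add_const (X ^ 2)
  rw [funext fun T => (hasDerivAt_grazingKink_time κ X T).deriv]
  exact ((hasDerivAt_sinh T).const_mul (4 * κ * X)).div hden (by positivity)

theorem hasDerivAt_deriv_grazingKink_space :
    HasDerivAt (deriv fun X => grazingKink κ X T)
      (8 * κ * X * cosh T / (cosh T ^ 2 + X ^ 2) ^ 2) X := by
  have hden : HasDerivAt (fun X => cosh T ^ 2 + X ^ 2) (2 * X) X := by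
    simpa using (hasDerivAt_pow 2 X).const_add (cosh T ^ 2)
  rw [funext fun X => (hasDerivAt_grazingKink_space κ X T).deriv]
  refine (hasDerivAt_const X (-(4 * κ * cosh T))).div hden (by positivity) |>.congr_deriv ?_
  field_simp
  ring

end

section
variable {κ : ℝ} (hκ : κ = 1 ∨ κ = -1) (X T : ℝ)
include hκ

theorem cos_grazingKink : cos (grazingKink κ X T) =
    8 * X ^ 2 * ((cosh T)⁻¹) ^ 2 / (1 + X ^ 2 * ((cosh T)⁻¹) ^ 2) ^ 2 - 1 := by
  have hc := (cosh_pos T).ne'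
  have hcos : cos (4 * κ * arctan (X * (cosh T)⁻¹)) = cos (4 * arctan (X * (cosh T)⁻¹)) := by
    rcases hκ with rfl | rfl
    · rw [mul_one]
    · rw [mul_neg_one, neg_mul, cos_neg]
  rw [grazingKink, cos_pi_sub, hcos, cos_four_mul_arctan]
  field_simp
  ring

theorem sin_grazingKink : sin (grazingKink κ X T) =
    4 * κ * X * (cosh T)⁻¹ * (1 - X ^ 2 * ((cosh T)⁻¹) ^ 2) /
      (1 + X ^ 2 * ((cosh T)⁻¹) ^ 2) ^ 2 := by
  have hc := (cosh_pos T).ne'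
  have hsin : sin (4 * κ * arctan (X * (cosh T)⁻¹)) = κ * sin (4 * arctan (X * (cosh T)⁻¹)) := by
    rcases hκ with rfl | rfl
    · rw [mul_one, one_mul]
    · rw [mul_neg_one, neg_mul, sin_neg, neg_one_mul]
  rw [grazingKink, sin_pi_sub, hsin, sin_four_mul_arctan]
  field_simp

theorem grazingKink_sineGordon :
    deriv (deriv fun T => grazingKink κ X T) T - deriv (deriv fun X => grazingKink κ X T) X
      + sin (grazingKink κ X T) = 0 := by
  have hc := (cosh_pos T).ne'
  rw [(hasDerivAt_deriv_grazingKink_time κ X T).deriv,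
    (hasDerivAt_deriv_grazingKink_space κ X T).deriv, sin_grazingKink hκ]
  field_simp
  linear_combination (-(8 * κ * X * cosh T)) * sinh_sq T

end

/-- the grazing-collision formulas define an angle (the expressions lie on
the unit circle) and the resulting `u(X,T)` solves the sine-Gordon equation
`u_TT - u_XX + sin u = 0`. -/
theorem stmt_9 (κ : ℝ) (hκ : κ = 1 ∨ κ = -1) (u : ℝ → ℝ → ℝ)
    (hu : ContDiff ℝ 2 (Function.uncurry u))
    (hcos : ∀ X T : ℝ, Real.cos (u X T) =
      8 * X ^ 2 * ((Real.cosh T)⁻¹) ^ 2 / (1 + X ^ 2 * ((Real.cosh T)⁻¹) ^ 2) ^ 2 - 1)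
    (hsin : ∀ X T : ℝ, Real.sin (u X T) =
      4 * κ * X * (Real.cosh T)⁻¹ * (1 - X ^ 2 * ((Real.cosh T)⁻¹) ^ 2) /
        (1 + X ^ 2 * ((Real.cosh T)⁻¹) ^ 2) ^ 2) :
    (∀ X T : ℝ,
      (8 * X ^ 2 * ((Real.cosh T)⁻¹) ^ 2 / (1 + X ^ 2 * ((Real.cosh T)⁻¹) ^ 2) ^ 2 - 1) ^ 2 +
      (4 * κ * X * (Real.cosh T)⁻¹ * (1 - X ^ 2 * ((Real.cosh T)⁻¹) ^ 2) /
        (1 + X ^ 2 * ((Real.cosh T)⁻¹) ^ 2) ^ 2) ^ 2 = 1) ∧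
    (∀ X T : ℝ,
      deriv (deriv fun T' => u X T') T - deriv (deriv fun X' => u X' T) X
        + Real.sin (u X T) = 0) := by
  refine ⟨fun X T => by rw [← hcos, ← hsin, cos_sq_add_sin_sq], fun X T => ?_⟩
  set C := u 0 0 - grazingKink κ 0 0
  have hu_eq : ∀ x t, u x t = grazingKink κ x t + C := fun x t => by
    have := sub_eq_sub_of_cos_eq_of_sin_eq hu.continuous (continuous_grazingKink κ)
      (fun p => (hcos p.1 p.2).trans (cos_grazingKink hκ p.1 p.2).symm)
      (fun p => (hsin p.1 p.2).trans (sin_grazingKink hκ p.1 p.2).symm) (x, t) (0, 0)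
    simp only [Function.uncurry_apply_pair] at this
    linarith
  rw [hsin, ← sin_grazingKink hκ]
  simp only [hu_eq, deriv_add_const']
  exact grazingKink_sineGordon hκ X T
end

section
/- Let J, K, S, w* be real numbers with w* < 0 and S = √(-w*). Then the 4×4 real linear system for vectors b, d ∈ ℂ² given by (I - (iJ/(4w*))σ₂) b + (J/(2S)) σ₂ d = (J, 0)ᵀ and ((J + SK)/(4 w* S)) σ₂ b + (I - (iJ + 2iSK)/(4w*) σ₂) d = (iK, 0)ᵀ has determinant-type denominator D = (16 w*² + J²)² + 64 w*² (J + SK)², which satisfies D ≥ 256 w*⁴ > 0; hence the system has a unique solution for all real J, K. -/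
/-!
All four blocks of the system lie in the commutative algebra spanned by `1` and `σ₂`, where
`σ₂ * σ₂ = 1`. Block elimination therefore reduces unique solvability to the invertibility of
the single `2 × 2` matrix `AD - BC = p • 1 - q • σ₂`, whose determinant is `p ^ 2 - q ^ 2`.
Since `S ^ 2 = -w*`, the scalar `p = 1 + J ^ 2 / (16 w* ^ 2)` is real and
`q = i (J + S K) / (2 w*)` is purely imaginary, so `p ^ 2 - q ^ 2 = D / (256 w* ^ 4) > 0`.
-/

open Matrix

section BlockSystem

variable {R n : Type*} [Fintype n]

def blockMulVecLin [CommSemiring R] (A B C D : Matrix n n R) :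
    (n → R) × (n → R) →ₗ[R] (n → R) × (n → R) :=
  (A.mulVecLin.coprod B.mulVecLin).prod (C.mulVecLin.coprod D.mulVecLin)

@[simp]
theorem blockMulVecLin_apply [CommSemiring R] (A B C D : Matrix n n R) (bd : (n → R) × (n → R)) :
    blockMulVecLin A B C D bd = (A *ᵥ bd.1 + B *ᵥ bd.2, C *ᵥ bd.1 + D *ᵥ bd.2) :=
  rfl

variable [Field R] [DecidableEq n] {A B C D : Matrix n n R}

theorem blockMulVecLin_injective (hAC : Commute A C) (hAD : Commute A D) (hBC : Commute B C)
    (hBD : Commute B D) (hM : IsUnit (A * D - B * C)) :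
    Function.Injective (blockMulVecLin A B C D) := by
  rw [← LinearMap.ker_eq_bot, LinearMap.ker_eq_bot']
  rintro ⟨b, d⟩ h
  obtain ⟨h₁, h₂⟩ : A *ᵥ b + B *ᵥ d = 0 ∧ C *ᵥ b + D *ᵥ d = 0 := by
    simpa only [blockMulVecLin_apply, Prod.mk_eq_zero] using h
  have hb : (A * D - B * C) *ᵥ b = D *ᵥ (A *ᵥ b + B *ᵥ d) - B *ᵥ (C *ᵥ b + D *ᵥ d) := by
    simp only [sub_mulVec, mulVec_add, mulVec_mulVec]
    rw [hAD.eq, hBD.eq]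
    abel
  have hd : (A * D - B * C) *ᵥ d = A *ᵥ (C *ᵥ b + D *ᵥ d) - C *ᵥ (A *ᵥ b + B *ᵥ d) := by
    simp only [sub_mulVec, mulVec_add, mulVec_mulVec]
    rw [hAC.eq, hBC.eq]
    abel
  rw [h₁, h₂, mulVec_zero, mulVec_zero, sub_zero, ← mulVec_zero (A * D - B * C)] at hb hd
  have hM_inj := mulVec_injective_iff_isUnit.mpr hM
  exact Prod.ext (hM_inj hb) (hM_inj hd)

theorem existsUnique_block_system (hAC : Commute A C) (hAD : Commute A D) (hBC : Commute B C)
    (hBD : Commute B D) (hM : IsUnit (A * D - B * C)) (u v : n → R) :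
    ∃! bd : (n → R) × (n → R), A *ᵥ bd.1 + B *ᵥ bd.2 = u ∧ C *ᵥ bd.1 + D *ᵥ bd.2 = v := by
  have hinj := blockMulVecLin_injective hAC hAD hBC hBD hM
  have hbij : Function.Bijective (blockMulVecLin A B C D) :=
    ⟨hinj, LinearMap.injective_iff_surjective.mp hinj⟩
  simpa [Prod.ext_iff] using hbij.existsUnique (u, v)

end BlockSystem

theorem one_sub_smul_mul_one_sub_smul_sub {R A : Type*} [CommRing R] [Ring A] [Algebra R A]
    {σ : A} (hσ : σ * σ = 1) (a c e f : R) :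
    (1 - a • σ) * (1 - f • σ) - (c • σ) * (e • σ) = (1 + a * f - c * e) • 1 - (a + f) • σ := by
  simp only [mul_sub, sub_mul, hσ, one_mul, mul_one, smul_mul_assoc, mul_smul_comm]
  module

theorem pauliY_mul_self :
    !![0, -Complex.I; Complex.I, 0] * !![0, -Complex.I; Complex.I, 0] = 1 := by
  simp [one_fin_two]

theorem det_smul_one_sub_smul_pauliY (p q : ℂ) :
    (p • (1 : Matrix (Fin 2) (Fin 2) ℂ) - q • !![0, -Complex.I; Complex.I, 0]).det =
      p ^ 2 - q ^ 2 := by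
  rw [det_fin_two]
  simp [one_apply]
  linear_combination q ^ 2 * Complex.I_sq

/-- the linear system determining the principal part of the parametrix has
denominator `D = (16w*² + J²)² + 64w*²(J + SK)² ≥ 256w*⁴ > 0`, hence a unique solution. -/
theorem stmt_15 (J K S ws : ℝ) (hws : ws < 0) (hS : S = Real.sqrt (-ws)) :
    let σ₂ : Matrix (Fin 2) (Fin 2) ℂ := !![0, -Complex.I; Complex.I, 0]
    let D : ℝ := (16 * ws ^ 2 + J ^ 2) ^ 2 + 64 * ws ^ 2 * (J + S * K) ^ 2
    256 * ws ^ 4 ≤ D ∧ 0 < D ∧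
    ∃! bd : (Fin 2 → ℂ) × (Fin 2 → ℂ),
      ((1 : Matrix (Fin 2) (Fin 2) ℂ)
          - (Complex.I * (J : ℂ) / (4 * (ws : ℂ))) • σ₂) *ᵥ bd.1
        + (((J : ℂ) / (2 * (S : ℂ))) • (σ₂ *ᵥ bd.2)) = ![(J : ℂ), 0] ∧
      ((((J : ℂ) + (S : ℂ) * (K : ℂ)) / (4 * (ws : ℂ) * (S : ℂ))) • (σ₂ *ᵥ bd.1))
        + ((1 : Matrix (Fin 2) (Fin 2) ℂ)
            - ((Complex.I * (J : ℂ) + 2 * Complex.I * (S : ℂ) * (K : ℂ)) / (4 * (ws : ℂ))) • σ₂)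
          *ᵥ bd.2 = ![Complex.I * (K : ℂ), 0] := by
  intro σ₂ D
  have hD : 256 * ws ^ 4 ≤ D := by nlinarith [sq_nonneg J, sq_nonneg (J + S * K), sq_nonneg ws]
  have hD0 : 0 < D := lt_of_lt_of_le (by have := hws.ne; positivity) hD
  refine ⟨hD, hD0, ?_⟩
  have hσ_comm (a : ℂ) : Commute σ₂ (1 - a • σ₂) :=
    (Commute.one_right σ₂).sub_right ((Commute.refl σ₂).smul_right a)
  simp only [← smul_mulVec]
  apply existsUnique_block_system ((hσ_comm _).symm.smul_right _)
    ((Commute.one_right _).sub_right ((hσ_comm _).symm.smul_right _))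
    (((Commute.refl σ₂).smul_left _).smul_right _) ((hσ_comm _).smul_left _)
  rw [one_sub_smul_mul_one_sub_smul_sub pauliY_mul_self, isUnit_iff_isUnit_det,
    det_smul_one_sub_smul_pauliY, isUnit_iff_ne_zero]
  have hws0 : (ws : ℂ) ≠ 0 := by exact_mod_cast hws.ne
  have hS2 : S ^ 2 = -ws := by rw [hS, Real.sq_sqrt (by linarith)]
  have hS0 : (S : ℂ) ≠ 0 := by
    have : S ≠ 0 := by rintro rfl; linarith
    exact_mod_cast this
  have hS2c : (S : ℂ) ^ 2 = -ws := by exact_mod_cast hS2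
  have hDc : (D : ℂ) / (256 * ws ^ 4) ≠ 0 :=
    div_ne_zero (by exact_mod_cast hD0.ne') (by simp [hws0])
  convert hDc using 1
  simp only [D]
  push_cast
  field_simp
  rw [Complex.I_sq, show (ws : ℂ) = -S ^ 2 by linear_combination hS2c]
  ring
end

section
/- Suppose (U_m, V_m) is a solution of the coupled system U'' + 2U²V + (1/3)yU = 0, V'' + 2UV² + (1/3)yV = 0 meromorphic near y₀ with a simple pole at y₀, with Laurent expansions U_m(y) = k[1/(y-y₀) + (y₀/18)(y-y₀) + (1/12 + ω)(y-y₀)² + O((y-y₀)³)] and V_m(y) = -k^{-1}[1/(y-y₀) + (y₀/18)(y-y₀) + (1/12 - ω)(y-y₀)² + O((y-y₀)³)] for constants k ≠ 0 and ω. Then the function V_{m+1}(y) := 1/U_m(y) has a removable singularity at y₀ and extends analytically with a simple zero at y = y₀; likewise U_{m-1}(y) := 1/V_m(y) extends analytically with a simple zero at y₀. -/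
/-!
Near a simple pole with residue `c ≠ 0`, `U y = G y / (y - y₀)` with `G` analytic and
`G y₀ = c`, so `1 / U = (y - y₀) / G` is analytic at `y₀` with derivative `1 / c ≠ 0` there.
The residues of `U` and `V` at `y₀` are `k` and `-k⁻¹`.
-/

open Filter Topology

section

variable {𝕜 : Type*} [NontriviallyNormedField 𝕜] {U G : 𝕜 → 𝕜} {y₀ : 𝕜}

theorem exists_analyticAt_eq_inv_of_eq_div_sub (hG : AnalyticAt 𝕜 G y₀) (hG₀ : G y₀ ≠ 0)
    (hU : ∀ᶠ y in 𝓝[≠] y₀, U y = G y / (y - y₀)) :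
    ∃ W : 𝕜 → 𝕜, AnalyticAt 𝕜 W y₀ ∧ W y₀ = 0 ∧ deriv W y₀ ≠ 0 ∧
      ∀ᶠ y in 𝓝[≠] y₀, W y = (U y)⁻¹ := by
  have hW : HasDerivAt (fun y => (y - y₀) / G y) (G y₀)⁻¹ y₀ :=
    (((hasDerivAt_id' y₀).sub_const y₀).fun_div hG.differentiableAt.hasDerivAt hG₀).congr_deriv
      (by rw [sub_self, zero_mul, sub_zero, one_mul, sq, div_mul_cancel_left₀ hG₀])
  refine ⟨fun y => (y - y₀) / G y, by fun_prop (disch := exact hG₀), by simp,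
    by simpa [hW.deriv] using hG₀, ?_⟩
  filter_upwards [hU] with y hy
  rw [hy, inv_div]

theorem exists_analyticAt_eq_inv_of_simple_pole {c : 𝕜} {H : 𝕜 → 𝕜} (hc : c ≠ 0)
    (hH : AnalyticAt 𝕜 H y₀) (hU : ∀ᶠ y in 𝓝[≠] y₀, U y = c / (y - y₀) + H y) :
    ∃ W : 𝕜 → 𝕜, AnalyticAt 𝕜 W y₀ ∧ W y₀ = 0 ∧ deriv W y₀ ≠ 0 ∧
      ∀ᶠ y in 𝓝[≠] y₀, W y = (U y)⁻¹ := by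
  refine exists_analyticAt_eq_inv_of_eq_div_sub (G := fun y => c + (y - y₀) * H y)
    (by fun_prop) (by simpa using hc) ?_
  filter_upwards [hU, self_mem_nhdsWithin] with y hy hne
  have : y - y₀ ≠ 0 := sub_ne_zero.mpr hne
  rw [hy]
  field_simp

end

theorem stmt_18_general (U V : ℂ → ℂ) (y₀ k ω : ℂ) (hk : k ≠ 0)
    (hU : ∃ RU : ℂ → ℂ, AnalyticAt ℂ RU y₀ ∧ ∀ᶠ y in 𝓝[≠] y₀,
      U y = k * ((y - y₀)⁻¹ + (y₀ / 18) * (y - y₀) + (1 / 12 + ω) * (y - y₀) ^ 2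
        + RU y * (y - y₀) ^ 3))
    (hV : ∃ RV : ℂ → ℂ, AnalyticAt ℂ RV y₀ ∧ ∀ᶠ y in 𝓝[≠] y₀,
      V y = -k⁻¹ * ((y - y₀)⁻¹ + (y₀ / 18) * (y - y₀) + (1 / 12 - ω) * (y - y₀) ^ 2
        + RV y * (y - y₀) ^ 3)) :
    (∃ W : ℂ → ℂ, AnalyticAt ℂ W y₀ ∧ W y₀ = 0 ∧ deriv W y₀ ≠ 0 ∧
      ∀ᶠ y in 𝓝[≠] y₀, W y = (U y)⁻¹) ∧
    (∃ W : ℂ → ℂ, AnalyticAt ℂ W y₀ ∧ W y₀ = 0 ∧ deriv W y₀ ≠ 0 ∧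
      ∀ᶠ y in 𝓝[≠] y₀, W y = (V y)⁻¹) := by
  obtain ⟨RU, hRU, hUeq⟩ := hU
  obtain ⟨RV, hRV, hVeq⟩ := hV
  constructor
  · refine exists_analyticAt_eq_inv_of_simple_pole hk
      (H := fun y => k * ((y₀ / 18) * (y - y₀) + (1 / 12 + ω) * (y - y₀) ^ 2
        + RU y * (y - y₀) ^ 3)) (by fun_prop) ?_
    filter_upwards [hUeq] with y hy
    rw [hy]
    ring
  · refine exists_analyticAt_eq_inv_of_simple_pole (neg_ne_zero.mpr (inv_ne_zero hk))
      (H := fun y => -k⁻¹ * ((y₀ / 18) * (y - y₀) + (1 / 12 - ω) * (y - y₀) ^ 2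
        + RV y * (y - y₀) ^ 3)) (by fun_prop) ?_
    filter_upwards [hVeq] with y hy
    rw [hy]
    ring

/-- singularity confinement — if `(U, V)` solves the coupled Painlevé-II
system near `y₀` with the stated simple-pole Laurent expansions, then `1/U` and `1/V`
extend analytically to `y₀` with simple zeros there. -/
theorem stmt_18 (U V : ℂ → ℂ) (y₀ k ω : ℂ) (hk : k ≠ 0)
    (hU : ∃ RU : ℂ → ℂ, AnalyticAt ℂ RU y₀ ∧ ∀ᶠ y in 𝓝[≠] y₀,
      U y = k * ((y - y₀)⁻¹ + (y₀ / 18) * (y - y₀) + (1 / 12 + ω) * (y - y₀) ^ 2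
        + RU y * (y - y₀) ^ 3))
    (hV : ∃ RV : ℂ → ℂ, AnalyticAt ℂ RV y₀ ∧ ∀ᶠ y in 𝓝[≠] y₀,
      V y = -k⁻¹ * ((y - y₀)⁻¹ + (y₀ / 18) * (y - y₀) + (1 / 12 - ω) * (y - y₀) ^ 2
        + RV y * (y - y₀) ^ 3))
    (hode1 : ∀ᶠ y in 𝓝[≠] y₀,
      deriv (deriv U) y + 2 * U y ^ 2 * V y + (1 / 3) * y * U y = 0)
    (hode2 : ∀ᶠ y in 𝓝[≠] y₀,
      deriv (deriv V) y + 2 * U y * V y ^ 2 + (1 / 3) * y * V y = 0) :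
    (∃ W : ℂ → ℂ, AnalyticAt ℂ W y₀ ∧ W y₀ = 0 ∧ deriv W y₀ ≠ 0 ∧
      ∀ᶠ y in 𝓝[≠] y₀, W y = (U y)⁻¹) ∧
    (∃ W : ℂ → ℂ, AnalyticAt ℂ W y₀ ∧ W y₀ = 0 ∧ deriv W y₀ ≠ 0 ∧
      ∀ᶠ y in 𝓝[≠] y₀, W y = (V y)⁻¹) :=
  stmt_18_general U V y₀ k ω hk hU hV
end
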